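/- Let G = ([p], E) be the complete graph on [p] with the single edge {1,2} removed (i.e., K_p ∖ {1,2}). Then CIM_G is a simplex of dimension 2^{p−2} − 1. -/

import Mathlib

open Classical

/-- A DAG on vertex type `V`: a directed graph (adjacency relation) with no directed cycles. -/
structure DAG (V : Type) where
  adj : V → V → Prop
  acyclic : ∀ v, ¬ Relation.TransGen adj v v

namespace DAG

variable {V : Type}

/-- The skeleton of a DAG: the undirected graph obtained by forgetting directions. -/
def skeleton (D : DAG V) : SimpleGraph V where
  Adj i j := D.adj i j ∨ D.adj j i
  symm := by constructor; intro i j h; exact h.symm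
  loopless := by
    constructor
    intro i h
    rcases h with h | h <;> exact D.acyclic i (Relation.TransGen.single h)

/-- The characteristic imset of a DAG, as a vector indexed by finite vertex sets
(coordinates on sets of size `< 2` are identically zero). -/
noncomputable def imset (D : DAG V) (S : Finset V) : ℝ :=
  if 2 ≤ S.card ∧ ∃ i ∈ S, ∀ j ∈ S, j ≠ i → D.adj j i then 1 else 0

/-- `D.IsVStructure i j k` means `i → j ← k` is an induced subgraph of `D`
(`i` and `k` non-adjacent). -/
def IsVStructure (D : DAG V) (i j k : V) : Prop :=
  i ≠ k ∧ D.adj i j ∧ D.adj k j ∧ ¬ D.adj i k ∧ ¬ D.adj k i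

end DAG

/-- Two DAGs are Markov equivalent iff they have the same skeleton and the same
v-structures. -/
def MarkovEquiv {V : Type} (D E : DAG V) : Prop :=
  D.skeleton = E.skeleton ∧ ∀ i j k, D.IsVStructure i j k ↔ E.IsVStructure i j k

/-- An arrow `i → j` of `D` is essential if it occurs in every DAG Markov equivalent to `D`. -/
def DAG.Essential {V : Type} (D : DAG V) (i j : V) : Prop :=
  D.adj i j ∧ ∀ E : DAG V, MarkovEquiv D E → E.adj i j

/-- The characteristic imset polytope of an undirected graph `G`: the convex hull of the
characteristic imsets of all DAGs with skeleton `G`. -/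
noncomputable def CIM {V : Type} (G : SimpleGraph V) : Set (Finset V → ℝ) :=
  convexHull ℝ { f | ∃ D : DAG V, D.skeleton = G ∧ f = D.imset }

/-- `conv(u,v)` is an edge (one-dimensional face) of `P`: there is a linear functional whose
maximum over `P` is attained exactly on the segment from `u` to `v`. -/
def IsPolytopeEdge {E : Type*} [AddCommGroup E] [Module ℝ E] (P : Set E) (u v : E) : Prop :=
  u ≠ v ∧ ∃ φ : E →ₗ[ℝ] ℝ, (∀ x ∈ P, φ x ≤ φ u) ∧ ∀ x ∈ P, (φ x = φ u ↔ x ∈ segment ℝ u v)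

/-- `P` is a simplex of dimension `d`: the convex hull of `d+1` affinely independent points. -/
def IsSimplexOfDim {E : Type*} [AddCommGroup E] [Module ℝ E] (P : Set E) (d : ℕ) : Prop :=
  ∃ pts : Fin (d + 1) → E, AffineIndependent ℝ pts ∧ P = convexHull ℝ (Set.range pts)

/-- The standard basis vector indexed by `S`. -/
noncomputable def eVec {V : Type} (S : Finset V) : Finset V → ℝ :=
  fun T => if T = S then 1 else 0

/-- The complete graph on `Fin (n+2)` with the single edge `{0, 1}` removed. -/
def almostCompleteGraph (n : ℕ) : SimpleGraph (Fin (n + 2)) :=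
  SimpleGraph.fromRel (fun i j => ¬ ((i = 0 ∧ j = 1) ∨ (i = 1 ∧ j = 0)))

namespace CIMHelper

open Finset

variable {n : ℕ}

def emb (t : Fin n) : Fin (n + 2) := ⟨t.val + 2, by omega⟩

lemma emb_ne_zero (t : Fin n) : emb t ≠ (0 : Fin (n+2)) := by
  simp [Fin.ext_iff, emb]

lemma emb_ne_one (t : Fin n) : emb t ≠ (1 : Fin (n+2)) := by
  simp [Fin.ext_iff, emb]

lemma emb_injective : Function.Injective (emb (n := n)) := by
  intro a b h
  have := congrArg Fin.val h
  simp only [emb] at this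
  exact Fin.ext (by omega)

lemma val_ge_two {i : Fin (n+2)} (h0 : i ≠ 0) (h1 : i ≠ 1) : 2 ≤ i.val := by
  have h3 := i.isLt
  rcases Nat.lt_or_ge i.val 2 with h | h
  · interval_cases hi : i.val
    · exact absurd (Fin.ext (by simp [hi])) h0
    · exact absurd (Fin.ext (by simp [hi])) h1
  · exact h

lemma exists_emb {i : Fin (n+2)} (h0 : i ≠ 0) (h1 : i ≠ 1) : ∃ t : Fin n, emb t = i := by
  have h2 := val_ge_two h0 h1
  have h3 := i.isLt
  exact ⟨⟨i.val - 2, by omega⟩, Fin.ext (by simp [emb]; omega)⟩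

lemma adj_iff {i j : Fin (n+2)} :
    (almostCompleteGraph n).Adj i j ↔ i ≠ j ∧ ¬(i = 0 ∧ j = 1) ∧ ¬(i = 1 ∧ j = 0) := by
  simp only [almostCompleteGraph, SimpleGraph.fromRel_adj]
  tauto

lemma zero_ne_one : (0 : Fin (n+2)) ≠ 1 := by simp [Fin.ext_iff]

lemma not_adj_01 : ¬ (almostCompleteGraph n).Adj 0 1 := by
  rw [adj_iff]; tauto

lemma not_adj_10 : ¬ (almostCompleteGraph n).Adj 1 0 := by
  rw [adj_iff]; tauto

end CIMHelper

namespace CIMHelper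
open Finset
variable {n : ℕ}

/-- the characteristic imset vector determined by a collider set `T`. -/
noncomputable def cvec (T : Finset (Fin n)) : Finset (Fin (n+2)) → ℝ :=
  fun S => if 2 ≤ S.card ∧ ((0 : Fin (n+2)) ∈ S → (1 : Fin (n+2)) ∈ S → ∃ t ∈ T, emb t ∈ S)
    then 1 else 0

/-- rank function used to orient the DAG with collider set `T`. -/
def rk (T : Finset (Fin n)) (i : Fin (n+2)) : ℕ :=
  if i = 0 then n + 2 else if i = 1 then n + 3
  else if i ∈ T.image emb then n + 4 + i.val else i.val

lemma rk_zero (T : Finset (Fin n)) : rk T 0 = n + 2 := by simp [rk]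

lemma rk_one (T : Finset (Fin n)) : rk T 1 = n + 3 := by
  simp [rk, zero_ne_one.symm]

lemma rk_emb_mem (T : Finset (Fin n)) {t : Fin n} (ht : t ∈ T) :
    rk T (emb t) = n + 4 + (t.val + 2) := by
  have h : emb t ∈ T.image emb := Finset.mem_image_of_mem _ ht
  unfold rk
  rw [if_neg (emb_ne_zero t), if_neg (emb_ne_one t), if_pos h]
  rfl

lemma rk_injective (T : Finset (Fin n)) : Function.Injective (rk T) := by
  intro i j heq
  have hi := i.isLt; have hj := j.isLt
  have h2i : i ≠ 0 → i ≠ 1 → 2 ≤ i.val := fun a b => val_ge_two a b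
  have h2j : j ≠ 0 → j ≠ 1 → 2 ≤ j.val := fun a b => val_ge_two a b
  unfold rk at heq
  split_ifs at heq with a1 a2 a3 a4 a5 a6 a7 a8 a9 <;>
    first
      | (subst_vars; rfl)
      | (exact Fin.ext (by omega))

end CIMHelper
namespace CIMHelper
open Finset
variable {n : ℕ}

lemma transgen_lt {α : Type} {f : α → ℕ} {r : α → α → Prop}
    (h : ∀ a b, r a b → f a < f b) {a b : α} (h' : Relation.TransGen r a b) : f a < f b := by
  induction h' with
  | single hab => exact h _ _ hab
  | tail _ hbc ih => exact ih.trans (h _ _ hbc)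

/-- The DAG with skeleton `almostCompleteGraph n` and collider set `T`. -/
def DT (T : Finset (Fin n)) : DAG (Fin (n+2)) where
  adj i j := (almostCompleteGraph n).Adj i j ∧ rk T i < rk T j
  acyclic := by
    intro v hv
    exact lt_irrefl _ (transgen_lt (fun a b hab => hab.2) hv)

lemma DT_skeleton (T : Finset (Fin n)) : (DT T).skeleton = almostCompleteGraph n := by
  ext i j
  show ((almostCompleteGraph n).Adj i j ∧ _) ∨ ((almostCompleteGraph n).Adj j i ∧ _) ↔ _
  constructor
  · rintro (⟨h, -⟩ | ⟨h, -⟩)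
    · exact h
    · exact h.symm
  · intro h
    rcases lt_trichotomy (rk T i) (rk T j) with hlt | heq | hgt
    · exact Or.inl ⟨h, hlt⟩
    · exact absurd (rk_injective T heq) h.ne
    · exact Or.inr ⟨h.symm, hgt⟩

lemma DT_imset (T : Finset (Fin n)) : (DT T).imset = cvec T := by
  funext S
  unfold DAG.imset cvec
  have hiff : (2 ≤ S.card ∧ ∃ i ∈ S, ∀ j ∈ S, j ≠ i → (DT T).adj j i) ↔
      (2 ≤ S.card ∧ ((0 : Fin (n+2)) ∈ S → (1 : Fin (n+2)) ∈ S → ∃ t ∈ T, emb t ∈ S)) := by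
    refine and_congr_right fun hcard => ?_
    constructor
    · -- a sink gives a collider in S
      rintro ⟨i, hiS, hsink⟩ h0 h1
      have hi0 : i ≠ 0 := by
        rintro rfl
        exact not_adj_10 (hsink 1 h1 zero_ne_one.symm).1
      have hi1 : i ≠ 1 := by
        rintro rfl
        exact not_adj_01 (hsink 0 h0 zero_ne_one).1
      obtain ⟨t, rfl⟩ := exists_emb hi0 hi1
      refine ⟨t, ?_, hiS⟩
      by_contra htT
      have h1i := (hsink 1 h1 (Ne.symm (emb_ne_one t))).2
      rw [rk_one] at h1i
      have heq : rk T (emb t) = (emb t).val := by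
        unfold rk
        rw [if_neg (emb_ne_zero t), if_neg (emb_ne_one t), if_neg]
        simp only [Finset.mem_image]
        rintro ⟨s, hsT, hse⟩
        exact htT (emb_injective hse ▸ hsT)
      have := (emb t).isLt
      omega
    · -- a collider in S gives a sink (the rk-max of S)
      intro hcol
      have hne : S.Nonempty := Finset.card_pos.mp (by omega)
      obtain ⟨i, hiS, hmax⟩ := Finset.exists_max_image S (rk T) hne
      refine ⟨i, hiS, fun j hjS hji => ?_⟩
      have hlt : rk T j < rk T i :=
        lt_of_le_of_ne (hmax j hjS) (fun h => hji (rk_injective T h))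
      refine ⟨adj_iff.mpr ⟨hji, ?_, ?_⟩, hlt⟩
      · rintro ⟨rfl, rfl⟩
        obtain ⟨t, htT, htS⟩ := hcol hjS hiS
        have := hmax _ htS
        rw [rk_emb_mem T htT, rk_one] at this
        omega
      · rintro ⟨rfl, rfl⟩
        rw [rk_zero, rk_one] at hlt
        omega
  simp only [hiff]

end CIMHelper
namespace CIMHelper
open Finset
variable {n : ℕ}

/-- Every nonempty finite set contains a `TransGen`-maximal element of an acyclic relation. -/
lemma exists_maximal {V : Type} (D : DAG V) (S : Finset V) (hS : S.Nonempty) :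
    ∃ i ∈ S, ∀ j ∈ S, ¬ Relation.TransGen D.adj i j := by
  classical
  induction S using Finset.strongInduction with
  | _ S ih =>
    obtain ⟨x, hx⟩ := hS
    set U := S.filter (fun j => Relation.TransGen D.adj x j) with hU
    by_cases hUne : U.Nonempty
    · have hss : U ⊂ S := by
        refine Finset.ssubset_iff_of_subset (Finset.filter_subset _ _) |>.mpr ?_
        exact ⟨x, hx, by simp [hU, D.acyclic x]⟩
      obtain ⟨i, hiU, hmax⟩ := ih U hss hUne
      refine ⟨i, (Finset.mem_filter.mp hiU).1, fun j hjS hij => ?_⟩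
      exact hmax j (Finset.mem_filter.mpr ⟨hjS, ((Finset.mem_filter.mp hiU).2).trans hij⟩) hij
    · exact ⟨x, hx, fun j hjS h => hUne ⟨j, Finset.mem_filter.mpr ⟨hjS, h⟩⟩⟩

lemma imset_eq_cvec (D : DAG (Fin (n+2))) (hsk : D.skeleton = almostCompleteGraph n) :
    D.imset = cvec (Finset.univ.filter fun t : Fin n => D.adj 0 (emb t) ∧ D.adj 1 (emb t)) := by
  set T := Finset.univ.filter fun t : Fin n => D.adj 0 (emb t) ∧ D.adj 1 (emb t) with hT
  have hadj : ∀ i j : Fin (n+2), (D.adj i j ∨ D.adj j i) ↔ (almostCompleteGraph n).Adj i j := by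
    intro i j
    rw [← hsk]
    rfl
  have hone : ∀ {i j : Fin (n+2)}, i ≠ j → ¬(i = 0 ∧ j = 1) → ¬(i = 1 ∧ j = 0) →
      D.adj i j ∨ D.adj j i := by
    intro i j h1 h2 h3
    exact (hadj i j).mpr (adj_iff.mpr ⟨h1, h2, h3⟩)
  have hnoloop : ∀ {a b : Fin (n+2)}, D.adj a b → ¬ D.adj b a := by
    intro a b h h'
    exact D.acyclic a ((Relation.TransGen.single h).trans (Relation.TransGen.single h'))
  have hno3 : ∀ {a b c : Fin (n+2)}, D.adj a b → D.adj b c → ¬ D.adj c a := by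
    intro a b c h1 h2 h3
    exact D.acyclic a (((Relation.TransGen.single h1).trans (Relation.TransGen.single h2)).trans
      (Relation.TransGen.single h3))
  funext S
  unfold DAG.imset cvec
  have hiff : (2 ≤ S.card ∧ ∃ i ∈ S, ∀ j ∈ S, j ≠ i → D.adj j i) ↔
      (2 ≤ S.card ∧ ((0 : Fin (n+2)) ∈ S → (1 : Fin (n+2)) ∈ S → ∃ t ∈ T, emb t ∈ S)) := by
    refine and_congr_right fun hcard => ?_
    constructor
    · rintro ⟨i, hiS, hsink⟩ h0 h1
      have hi0 : i ≠ 0 := by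
        rintro rfl
        have := hsink 1 h1 zero_ne_one.symm
        exact not_adj_10 ((hadj 1 0).mp (Or.inl this))
      have hi1 : i ≠ 1 := by
        rintro rfl
        have := hsink 0 h0 zero_ne_one
        exact not_adj_01 ((hadj 0 1).mp (Or.inl this))
      obtain ⟨t, rfl⟩ := exists_emb hi0 hi1
      refine ⟨t, ?_, hiS⟩
      rw [hT, Finset.mem_filter]
      exact ⟨Finset.mem_univ t,
        hsink 0 h0 (Ne.symm (emb_ne_zero t)), hsink 1 h1 (Ne.symm (emb_ne_one t))⟩
    · intro hcol
      by_cases hboth : (0 : Fin (n+2)) ∈ S ∧ (1 : Fin (n+2)) ∈ S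
      · -- both 0 and 1 in S; use a collider
        obtain ⟨h0, h1⟩ := hboth
        obtain ⟨t, htT, htS⟩ := hcol h0 h1
        rw [hT, Finset.mem_filter] at htT
        obtain ⟨-, h0t, h1t⟩ := htT
        set S' := (S.erase 0).erase 1 with hS'
        have hmem' : ∀ {j : Fin (n+2)}, j ∈ S' ↔ j ≠ 1 ∧ j ≠ 0 ∧ j ∈ S := by
          intro j
          simp [hS', Finset.mem_erase, and_assoc]
        have htS' : emb t ∈ S' := hmem'.mpr ⟨emb_ne_one t, emb_ne_zero t, htS⟩
        obtain ⟨i, hiS', hmax⟩ := exists_maximal D S' ⟨emb t, htS'⟩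
        obtain ⟨hi1, hi0, hiS⟩ := hmem'.mp hiS'
        -- every element of S' other than i points to i
        have hpt : ∀ j ∈ S', j ≠ i → D.adj j i := by
          intro j hjS' hji
          obtain ⟨hj1, hj0, hjS⟩ := hmem'.mp hjS'
          rcases hone hji (by rintro ⟨rfl, rfl⟩; exact hj0 rfl) (by rintro ⟨rfl, rfl⟩; exact hj1 rfl) with h | h
          · exact h
          · exact absurd (Relation.TransGen.single h) (hmax j hjS')
        have h0i : D.adj 0 i := by
          rcases eq_or_ne (emb t) i with rfl | hne
          · exact h0t
          · have hci := hpt _ htS' hne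
            rcases hone (Ne.symm hi0) (by rintro ⟨-, rfl⟩; exact hi1 rfl)
              (by rintro ⟨h, -⟩; exact zero_ne_one h) with h | h
            · exact h
            · exact absurd h (hno3 h0t hci)
        have h1i : D.adj 1 i := by
          rcases eq_or_ne (emb t) i with rfl | hne
          · exact h1t
          · have hci := hpt _ htS' hne
            rcases hone (Ne.symm hi1) (by rintro ⟨h, -⟩; exact zero_ne_one h.symm)
              (by rintro ⟨-, rfl⟩; exact hi0 rfl) with h | h
            · exact h
            · exact absurd h (hno3 h1t hci)
        refine ⟨i, hiS, fun j hjS hji => ?_⟩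
        rcases eq_or_ne j 0 with rfl | hj0
        · exact h0i
        rcases eq_or_ne j 1 with rfl | hj1
        · exact h1i
        · exact hpt j (hmem'.mpr ⟨hj1, hj0, hjS⟩) hji
      · -- not both 0 and 1 in S: S is an acyclic tournament
        have hne : S.Nonempty := Finset.card_pos.mp (by omega)
        obtain ⟨i, hiS, hmax⟩ := exists_maximal D S hne
        refine ⟨i, hiS, fun j hjS hji => ?_⟩
        rcases hone hji (by rintro ⟨rfl, rfl⟩; exact hboth ⟨hjS, hiS⟩)
          (by rintro ⟨rfl, rfl⟩; exact hboth ⟨hiS, hjS⟩) with h | h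
        · exact h
        · exact absurd (Relation.TransGen.single h) (hmax j hjS)
  simp only [hiff]

end CIMHelper
namespace CIMHelper
open Finset
variable {n : ℕ}

lemma zero_not_mem_aux (A : Finset (Fin n)) :
    (0 : Fin (n+2)) ∉ insert 1 (A.image emb) := by
  simp only [Finset.mem_insert, Finset.mem_image, not_or, not_exists]
  refine ⟨zero_ne_one, fun x => ?_⟩
  rintro ⟨-, hx⟩
  exact emb_ne_zero x hx

lemma one_not_mem_aux (A : Finset (Fin n)) : (1 : Fin (n+2)) ∉ A.image emb := by
  simp only [Finset.mem_image, not_exists]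
  rintro x ⟨-, hx⟩
  exact emb_ne_one x hx

lemma cvec_eval (T A : Finset (Fin n)) :
    cvec T (insert 0 (insert 1 (A.image emb))) = if ∃ t ∈ T, t ∈ A then 1 else 0 := by
  unfold cvec
  have hcard : 2 ≤ (insert (0 : Fin (n+2)) (insert 1 (A.image emb))).card := by
    rw [Finset.card_insert_of_notMem (zero_not_mem_aux A),
      Finset.card_insert_of_notMem (one_not_mem_aux A)]
    omega
  have hmem : ∀ t : Fin n, emb t ∈ insert (0 : Fin (n+2)) (insert 1 (A.image emb)) ↔ t ∈ A := by
    intro t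
    simp only [Finset.mem_insert, Finset.mem_image]
    constructor
    · rintro (h | h | ⟨x, hxA, hx⟩)
      · exact absurd h (emb_ne_zero t)
      · exact absurd h (emb_ne_one t)
      · exact emb_injective hx ▸ hxA
    · intro h
      exact Or.inr (Or.inr ⟨t, h, rfl⟩)
  have hiff : (2 ≤ (insert (0 : Fin (n+2)) (insert 1 (A.image emb))).card ∧
      ((0 : Fin (n+2)) ∈ insert (0 : Fin (n+2)) (insert 1 (A.image emb)) →
       (1 : Fin (n+2)) ∈ insert (0 : Fin (n+2)) (insert 1 (A.image emb)) →
       ∃ t ∈ T, emb t ∈ insert (0 : Fin (n+2)) (insert 1 (A.image emb)))) ↔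
      (∃ t ∈ T, t ∈ A) := by
    constructor
    · rintro ⟨-, h⟩
      obtain ⟨t, htT, htm⟩ := h (Finset.mem_insert_self _ _)
        (Finset.mem_insert_of_mem (Finset.mem_insert_self _ _))
      exact ⟨t, htT, (hmem t).mp htm⟩
    · rintro ⟨t, htT, htA⟩
      exact ⟨hcard, fun _ _ => ⟨t, htT, (hmem t).mpr htA⟩⟩
  simp only [hiff]

lemma affineIndependent_cvec (n : ℕ) :
    AffineIndependent ℝ (fun T : Finset (Fin n) => cvec T) := by
  classical
  rw [affineIndependent_iff]
  intro s w hw hsum e he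
  set w' : Finset (Fin n) → ℝ := fun T => if T ∈ s then w T else 0 with hw'
  have h0 : ∑ T, w' T = 0 := by
    rw [hw', Finset.sum_ite_mem, Finset.univ_inter]
    exact hw
  have hsum' : ∑ T, w' T • cvec T = 0 := by
    calc ∑ T, w' T • cvec T
        = ∑ T, (if T ∈ s then w T • cvec T else (0 : Finset (Fin (n+2)) → ℝ)) := by
          refine Finset.sum_congr rfl fun T _ => ?_
          rw [hw']
          by_cases h : T ∈ s <;> simp [h]
      _ = ∑ T ∈ s, w T • cvec T := by rw [Finset.sum_ite_mem, Finset.univ_inter]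
      _ = 0 := hsum
  have key : ∀ B : Finset (Fin n), ∑ T ∈ B.powerset, w' T = 0 := by
    intro B
    have h1 := congrFun hsum' (insert 0 (insert 1 ((Bᶜ).image emb)))
    rw [Finset.sum_apply, Pi.zero_apply] at h1
    have h2 : ∀ T ∈ (Finset.univ : Finset (Finset (Fin n))),
        (w' T • cvec T) (insert 0 (insert 1 ((Bᶜ).image emb)))
        = if ∃ t ∈ T, t ∈ Bᶜ then w' T else 0 := by
      intro T _
      rw [Pi.smul_apply, smul_eq_mul, cvec_eval]
      by_cases h : ∃ t ∈ T, t ∈ Bᶜ <;> simp [h]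
    rw [Finset.sum_congr rfl h2, ← Finset.sum_filter] at h1
    have h3 := Finset.sum_filter_add_sum_filter_not Finset.univ
      (fun T : Finset (Fin n) => ∃ t ∈ T, t ∈ Bᶜ) w'

    have h5 : Finset.univ.filter (fun T : Finset (Fin n) => ¬ ∃ t ∈ T, t ∈ Bᶜ)
        = B.powerset := by
      ext T
      simp only [Finset.mem_filter, Finset.mem_univ, true_and, Finset.mem_powerset,
        not_exists, Finset.mem_compl, not_and, not_not, Finset.subset_iff]
    rw [h1, h0, zero_add, h5] at h3
    exact h3
  have main : ∀ B : Finset (Fin n), w' B = 0 := by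
    intro B
    induction B using Finset.strongInduction with
    | _ B ih =>
      have h := key B
      rw [← Finset.sum_erase_add _ _ (Finset.mem_powerset_self B)] at h
      have hz : ∑ T ∈ B.powerset.erase B, w' T = 0 :=
        Finset.sum_eq_zero fun T hT => ih T (Finset.ssubset_iff_subset_ne.mpr
          ⟨Finset.mem_powerset.mp (Finset.mem_of_mem_erase hT), Finset.ne_of_mem_erase hT⟩)
      rw [hz, zero_add] at h
      exact h
  have he' := main e
  simpa [hw', he] using he'

end CIMHelper

/-- **`CIM` of a complete graph minus one edge is a simplex.**  Let `G = K_p ∖ {1,2}` be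
the complete graph on `p = n+2` nodes with one edge removed.  Then `CIM_G` is a simplex of
dimension `2^{p-2} - 1 = 2^n - 1`. -/
theorem cim_almost_complete_simplex (n : ℕ) :
    IsSimplexOfDim (CIM (almostCompleteGraph n)) (2 ^ n - 1) := by
  classical
  have hpow : 0 < 2 ^ n := Nat.two_pow_pos n
  have hcard : Fintype.card (Finset (Fin n)) = 2 ^ n - 1 + 1 := by
    rw [Fintype.card_finset, Fintype.card_fin]
    omega
  let e : Fin (2 ^ n - 1 + 1) ≃ Finset (Fin n) := (Fintype.equivFinOfCardEq hcard).symm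
  refine ⟨fun k => CIMHelper.cvec (e k), ?_, ?_⟩
  · exact (CIMHelper.affineIndependent_cvec n).comp_embedding e.toEmbedding
  · have hset : { f | ∃ D : DAG (Fin (n+2)), D.skeleton = almostCompleteGraph n ∧ f = D.imset }
        = Set.range (fun T : Finset (Fin n) => CIMHelper.cvec T) := by
      ext f
      constructor
      · rintro ⟨D, hD, rfl⟩
        exact ⟨_, (CIMHelper.imset_eq_cvec D hD).symm⟩
      · rintro ⟨T, rfl⟩
        exact ⟨CIMHelper.DT T, CIMHelper.DT_skeleton T, (CIMHelper.DT_imset T).symm⟩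
    have hrange : Set.range (fun k => CIMHelper.cvec (e k))
        = Set.range (fun T : Finset (Fin n) => CIMHelper.cvec T) := by
      rw [show (fun k => CIMHelper.cvec (e k))
          = (fun T : Finset (Fin n) => CIMHelper.cvec T) ∘ e from rfl]
      exact e.surjective.range_comp _
    rw [CIM, hset, ← hrange]
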